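/- arXiv:2207.03274 — 3 statements merged into one kernel-verified Lean document; each statement's English description precedes it below -/
import Mathlib

section
/- Let θ : ℝ → ℝ be continuous with θ(t + 2π) = θ(t) + 2π·deg for all t, where deg is a nonzero integer, and suppose there exists a smooth function φ : ℝ → ℝ with φ(t+2π) = φ(t) + 2π·deg, φ′ nowhere zero, and |φ(t) − θ(t)| < π/2 for all t. Then for all a < b: if deg > 0 then θ(b) − θ(a) > −π, and if deg < 0 then θ(b) − θ(a) < π. -/
noncomputable section

open Real

/-- let `θ : ℝ → ℝ` be continuous with `θ(t+2π) = θ(t) + 2π·deg`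
for a nonzero integer `deg`, and suppose there is a smooth `φ` with the same
periodicity behaviour, nowhere vanishing derivative, and `|φ − θ| < π/2`.
Then for all `a < b`: if `deg > 0` then `θ(b) − θ(a) > −π`, and if `deg < 0`
then `θ(b) − θ(a) < π`. -/
theorem lemma_iv_implies_iii (θ : ℝ → ℝ) (hθ : Continuous θ) (deg : ℤ)
    (hdeg : deg ≠ 0) (hθper : ∀ t, θ (t + 2 * π) = θ t + 2 * π * deg)
    (φ : ℝ → ℝ) (hφ : ContDiff ℝ (⊤ : ℕ∞) φ)
    (hφper : ∀ t, φ (t + 2 * π) = φ t + 2 * π * deg)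
    (hφ' : ∀ t, deriv φ t ≠ 0)
    (hclose : ∀ t, |φ t - θ t| < π / 2) :
    ∀ a b : ℝ, a < b →
      (0 < deg → θ b - θ a > -π) ∧ (deg < 0 → θ b - θ a < π) := by
  have hdiff : Differentiable ℝ φ := hφ.differentiable (by simp)
  have hderiv_cont : Continuous (deriv φ) := hφ.continuous_deriv (by simp)
  -- deriv has constant sign
  have hsign : (∀ t, 0 < deriv φ t) ∨ (∀ t, deriv φ t < 0) := by
    by_contra h
    push_neg at h
    obtain ⟨⟨t₁, h₁⟩, ⟨t₂, h₂⟩⟩ := h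
    have h₁' : deriv φ t₁ < 0 := lt_of_le_of_ne h₁ (hφ' t₁)
    have h₂' : 0 < deriv φ t₂ := lt_of_le_of_ne h₂ (Ne.symm (hφ' t₂))
    obtain ⟨t, ht⟩ := intermediate_value_univ₂ (a := t₁) (b := t₂)
      (f := deriv φ) (g := fun _ => (0 : ℝ)) hderiv_cont
      continuous_const h₁'.le h₂'.le
    exact hφ' t ht
  have hπ : (0 : ℝ) < π := Real.pi_pos
  rcases hsign with hpos | hneg
  · have hmono : StrictMono φ := strictMono_of_deriv_pos hpos
    have hdegpos : 0 < deg := by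
      have h2 : φ 0 < φ (0 + 2 * π) := hmono (by linarith)
      rw [hφper 0] at h2
      have : (0:ℝ) < 2 * π * deg := by linarith
      have : (0:ℝ) < (deg : ℝ) := by nlinarith
      exact_mod_cast this
    intro a b hab
    have h1 := abs_lt.mp (hclose a)
    have h2 := abs_lt.mp (hclose b)
    have h3 : φ a < φ b := hmono hab
    constructor
    · intro _; linarith [h1.1, h1.2, h2.1, h2.2]
    · intro hneg'; omega
  · have hmono : StrictAnti φ := strictAnti_of_deriv_neg hneg
    have hdegneg : deg < 0 := by
      have h2 : φ (0 + 2 * π) < φ 0 := hmono (by linarith)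
      rw [hφper 0] at h2
      have : (2 * π) * (deg:ℝ) < 0 := by linarith
      have : (deg : ℝ) < 0 := by nlinarith
      exact_mod_cast this
    intro a b hab
    have h1 := abs_lt.mp (hclose a)
    have h2 := abs_lt.mp (hclose b)
    have h3 : φ b < φ a := hmono hab
    constructor
    · intro hpos'; omega
    · intro _; linarith [h1.1, h1.2, h2.1, h2.2]
end
end

section
/- Let θ : ℝ → ℝ be smooth with θ(t + 2π) = θ(t) + 2π·deg θ, where deg θ is a positive integer, and suppose that for all a < b one has θ(b) − θ(a) > −π. Then there exists a smooth function φ : ℝ → ℝ with φ(t+2π) = φ(t) + 2π·deg θ, φ′ > 0 everywhere, and |φ(t) − θ(t)| < π/2 for all t. -/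
noncomputable section

open Real MeasureTheory Set Metric Function

namespace LemmaIIIIVAux

/-- running max of `f` over the window `[t - 2π, t]`. -/
def M (f : ℝ → ℝ) (t : ℝ) : ℝ := sSup (f '' Set.Icc (t - 2*π) t)

lemma mem_win (f : ℝ → ℝ) (t : ℝ) : f t ∈ f '' Set.Icc (t - 2*π) t :=
  ⟨t, ⟨by nlinarith [pi_pos], le_refl t⟩, rfl⟩

lemma isGreatest_M {f : ℝ → ℝ} (hf : Continuous f) (t : ℝ) :
    IsGreatest (f '' Set.Icc (t - 2*π) t) (M f t) :=
  (isCompact_Icc.image hf).isGreatest_sSup ⟨f t, mem_win f t⟩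

lemma le_M {f : ℝ → ℝ} (hf : Continuous f) (t : ℝ) : f t ≤ M f t :=
  (isGreatest_M hf t).2 (mem_win f t)

lemma M_lt {f : ℝ → ℝ} (hf : Continuous f)
    (hh : ∀ a b : ℝ, a < b → f b - f a > -π) (t : ℝ) : M f t < f t + π := by
  obtain ⟨s, hs, hfs⟩ := (isGreatest_M hf t).1
  rcases lt_or_eq_of_le hs.2 with hlt | heq
  · have := hh s t hlt
    rw [← hfs]; linarith
  · rw [← hfs, heq]; linarith [pi_pos]

lemma aux_le_M {f : ℝ → ℝ} (hf : Continuous f) {D : ℝ} (hD0 : 0 ≤ D)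
    (hper : ∀ t, f (t + 2*π) = f t + D) :
    ∀ n : ℕ, ∀ s t : ℝ, s ≤ t → t - 2*π*(n+1) ≤ s → f s ≤ M f t := by
  intro n
  induction n with
  | zero =>
    intro s t h1 h2
    exact (isGreatest_M hf t).2 ⟨s, ⟨by push_cast at h2; linarith, h1⟩, rfl⟩
  | succ n ih =>
    intro s t h1 h2
    by_cases hc : t - 2*π*(n+1) ≤ s
    · exact ih s t h1 hc
    · push_neg at hc
      have hπ := pi_pos
      have hs2 : s + 2*π ≤ t := by
        have : (0:ℝ) ≤ 2*π*(n:ℝ) := by positivity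
        nlinarith
      have hs3 : t - 2*π*(n+1) ≤ s + 2*π := by push_cast at h2 ⊢; linarith
      have := ih (s + 2*π) t hs2 hs3
      rw [hper s] at this; linarith

lemma f_le_M {f : ℝ → ℝ} (hf : Continuous f) {D : ℝ} (hD0 : 0 ≤ D)
    (hper : ∀ t, f (t + 2*π) = f t + D) {s t : ℝ} (hst : s ≤ t) : f s ≤ M f t := by
  obtain ⟨n, hn⟩ := exists_nat_gt ((t - s) / (2*π))
  have hπ : (0:ℝ) < 2*π := by positivity
  have h1 : t - s < 2*π*n := by
    have := (div_lt_iff₀ hπ).mp hn; nlinarith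
  have h2 : t - 2*π*(n+1) ≤ s := by nlinarith
  exact aux_le_M hf hD0 hper n s t hst h2

lemma M_mono {f : ℝ → ℝ} (hf : Continuous f) {D : ℝ} (hD0 : 0 ≤ D)
    (hper : ∀ t, f (t + 2*π) = f t + D) : Monotone (M f) := by
  intro a b hab
  obtain ⟨s, hs, hfs⟩ := (isGreatest_M hf a).1
  rw [← hfs]
  exact f_le_M hf hD0 hper (le_trans hs.2 hab)

lemma M_per {f : ℝ → ℝ} (hf : Continuous f) {D : ℝ}
    (hper : ∀ t, f (t + 2*π) = f t + D) (t : ℝ) : M f (t + 2*π) = M f t + D := by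
  have hG : IsGreatest (f '' Set.Icc (t + 2*π - 2*π) (t + 2*π)) (M f t + D) := by
    constructor
    · obtain ⟨s, hs, hfs⟩ := (isGreatest_M hf t).1
      refine ⟨s + 2*π, ⟨by linarith [hs.1], by linarith [hs.2]⟩, ?_⟩
      rw [hper s, hfs]
    · rintro x ⟨s, hs, rfl⟩
      have h1 : f s = f (s - 2*π) + D := by
        have := hper (s - 2*π); rw [sub_add_cancel] at this; rw [this]
      rw [h1]
      have : f (s - 2*π) ≤ M f t :=
        (isGreatest_M hf t).2 ⟨s - 2*π, ⟨by linarith [hs.1], by linarith [hs.2]⟩, rfl⟩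
      linarith
  exact (hG.unique (isGreatest_M hf (t + 2*π))).symm

lemma M_lip {f : ℝ → ℝ} (hf : Continuous f) {D C : ℝ} (hD0 : 0 ≤ D)
    (hper : ∀ t, f (t + 2*π) = f t + D)
    (hC : ∀ a b : ℝ, |f a - f b| ≤ C * |a - b|) (a b : ℝ) :
    |M f a - M f b| ≤ C * |a - b| := by
  have key : ∀ x y : ℝ, x ≤ y → M f y - M f x ≤ C * (y - x) := by
    intro x y hxy
    obtain ⟨s, hs, hfs⟩ := (isGreatest_M hf y).1
    have hmem : f (s - (y - x)) ≤ M f x :=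
      (isGreatest_M hf x).2 ⟨s - (y - x), ⟨by linarith [hs.1], by linarith [hs.2]⟩, rfl⟩
    have hstep : f s - f (s - (y - x)) ≤ C * (y - x) := by
      have := hC s (s - (y - x))
      have habs : |s - (s - (y - x))| = y - x := by
        rw [abs_of_nonneg] <;> [skip; linarith]; ring
      rw [habs] at this
      calc f s - f (s - (y - x)) ≤ |f s - f (s - (y - x))| := le_abs_self _
        _ ≤ C * (y - x) := this
    rw [← hfs]; linarith
  rcases le_total a b with hab | hab
  · have h1 := key a b hab
    have h2 : M f a ≤ M f b := M_mono hf hD0 hper hab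
    rw [abs_of_nonpos (by linarith), abs_of_nonpos (by linarith)]
    linarith
  · have h1 := key b a hab
    have h2 : M f b ≤ M f a := M_mono hf hD0 hper hab
    rw [abs_of_nonneg (by linarith), abs_of_nonneg (by linarith)]
    linarith

end LemmaIIIIVAux

open LemmaIIIIVAux

set_option maxHeartbeats 2000000 in
/-- let `θ : ℝ → ℝ` be smooth with `θ(t+2π) = θ(t) + 2π·deg` for a
nonzero integer `deg > 0`, and suppose `θ(b) − θ(a) > −π` for all `a < b`.
Then there is a smooth `φ` with the same periodicity behaviour, `φ′ > 0`
everywhere, and `|φ − θ| < π/2`. -/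
theorem lemma_iii_implies_iv (θ : ℝ → ℝ) (hθ : ContDiff ℝ (⊤ : ℕ∞) θ) (deg : ℤ)
    (hdeg : 0 < deg) (hθper : ∀ t, θ (t + 2 * π) = θ t + 2 * π * deg)
    (h : ∀ a b : ℝ, a < b → θ b - θ a > -π) :
    ∃ φ : ℝ → ℝ, ContDiff ℝ (⊤ : ℕ∞) φ ∧
      (∀ t, φ (t + 2 * π) = φ t + 2 * π * deg) ∧
      (∀ t, 0 < deriv φ t) ∧
      (∀ t, |φ t - θ t| < π / 2) := by
  have hπ := pi_pos
  have hθc : Continuous θ := hθ.continuous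
  have hdiff : Differentiable ℝ θ := hθ.differentiable (by simp)
  have hdegR : (1:ℝ) ≤ (deg:ℝ) := by exact_mod_cast hdeg
  have hD0 : (0:ℝ) ≤ 2*π*(deg:ℝ) := by positivity
  have hθper' : ∀ t, θ (t + 2*π) = θ t + 2*π*(deg:ℝ) := by
    intro t; have := hθper t; push_cast at this ⊢; linarith
  -- the derivative of θ is periodic, hence bounded; θ is Lipschitz
  have hdper : Function.Periodic (deriv θ) (2*π) := by
    intro t
    have h1 : HasDerivAt (fun s => θ (s + 2*π)) (deriv θ (t + 2*π)) t := by
      have := (hdiff (t + 2*π)).hasDerivAt.comp t ((hasDerivAt_id t).add_const (2*π))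
      simp only [Function.comp_def, id, mul_one] at this; exact this
    have h3 : (fun s => θ (s + 2*π)) = fun s => θ s + 2*π*(deg:ℝ) := funext hθper'
    rw [h3] at h1
    exact h1.unique ((hdiff t).hasDerivAt.add_const _)
  have hdcont : Continuous (deriv θ) := hθ.continuous_deriv (by simp)
  obtain ⟨x0, hx0mem, hx0max⟩ :=
    isCompact_Icc.exists_isMaxOn (α := ℝ) ⟨0, le_refl 0, by positivity⟩
      ((continuous_abs.comp hdcont).continuousOn (s := Set.Icc 0 (2*π)))
  set C : ℝ := |deriv θ x0| with hCdef
  have hC0 : 0 ≤ C := abs_nonneg _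
  clear_value C
  have hdbound : ∀ t, |deriv θ t| ≤ C := by
    intro t
    obtain ⟨y, hy, hyeq⟩ := hdper.exists_mem_Ico₀ (by positivity) t
    rw [hyeq, hCdef]
    exact hx0max ⟨hy.1, le_of_lt hy.2⟩
  have hθlip : ∀ a b : ℝ, |θ a - θ b| ≤ C * |a - b| := by
    intro a b
    have := Convex.norm_image_sub_le_of_norm_deriv_le (s := (Set.univ : Set ℝ))
      (fun x _ => hdiff x) (fun x _ => by rw [Real.norm_eq_abs]; exact hdbound x)
      convex_univ (Set.mem_univ b) (Set.mem_univ a)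
    simpa [Real.norm_eq_abs] using this
  -- the dual function
  set θ' : ℝ → ℝ := fun s => -θ (-s) with hθ'def
  have hθ'c : Continuous θ' := (hθc.comp continuous_neg).neg
  clear_value θ'
  have hθ'per : ∀ t, θ' (t + 2*π) = θ' t + 2*π*(deg:ℝ) := by
    intro t
    have := hθper' (-t - 2*π)
    simp only [hθ'def]
    have he : -t - 2*π + 2*π = -t := by ring
    rw [he] at this
    have he2 : -(t + 2*π) = -t - 2*π := by ring
    rw [he2]; linarith
  have hθ'h : ∀ a b : ℝ, a < b → θ' b - θ' a > -π := by
    intro a b hab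
    have := h (-b) (-a) (by linarith)
    simp only [hθ'def]; linarith
  have hθ'lip : ∀ a b : ℝ, |θ' a - θ' b| ≤ C * |a - b| := by
    intro a b
    have h1 := hθlip (-a) (-b)
    have h2 : |(-a) - (-b)| = |a - b| := by rw [neg_sub_neg, abs_sub_comm]
    rw [h2] at h1
    have h3 : θ' a - θ' b = θ (-b) - θ (-a) := by simp only [hθ'def]; ring
    rw [h3, abs_sub_comm]
    exact h1
  -- G = (running max + running min)/2
  set g : ℝ → ℝ := fun t => -(M θ' (-t)) with hgdef
  set G : ℝ → ℝ := fun t => (M θ t + g t) / 2 with hGdef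
  clear_value g G
  have hMle : ∀ t, θ t ≤ M θ t := le_M hθc
  have hMlt : ∀ t, M θ t < θ t + π := M_lt hθc h
  have hθ'neg : ∀ t : ℝ, θ' (-t) = -θ t := by
    intro t; rw [hθ'def]; simp
  have hgle : ∀ t, g t ≤ θ t := by
    intro t
    have h1 := le_M hθ'c (-t)
    rw [hθ'neg t] at h1
    simp only [hgdef]
    linarith
  have hglt : ∀ t, θ t - π < g t := by
    intro t
    have h1 := M_lt hθ'c hθ'h (-t)
    rw [hθ'neg t] at h1
    simp only [hgdef]; linarith
  have hGclose : ∀ t, |G t - θ t| < π/2 := by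
    intro t
    rw [abs_lt]
    constructor
    · simp only [hGdef]; have ha := hMle t; have hb := hglt t; linarith
    · simp only [hGdef]; have ha := hMlt t; have hb := hgle t; linarith
  have hGmono : Monotone G := by
    have h1 : Monotone (M θ) := M_mono hθc hD0 hθper'
    have h2 : Monotone g := by
      intro a b hab
      simp only [hgdef]
      have := M_mono hθ'c hD0 hθ'per (neg_le_neg hab)
      linarith
    intro a b hab
    simp only [hGdef]
    have ha := h1 hab; have hb := h2 hab; linarith
  have hGper : ∀ t, G (t + 2*π) = G t + 2*π*(deg:ℝ) := by
    intro t
    have h1 : M θ (t + 2*π) = M θ t + 2*π*(deg:ℝ) := M_per hθc hθper' t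
    have h2 : g (t + 2*π) = g t + 2*π*(deg:ℝ) := by
      simp only [hgdef]
      have h3 := M_per hθ'c hθ'per (-(t + 2*π))
      have he : -(t + 2*π) + 2*π = -t := by ring
      rw [he] at h3
      rw [h3]; ring
    simp only [hGdef]
    rw [h1, h2]; ring
  have hGlip : ∀ a b : ℝ, |G a - G b| ≤ C * |a - b| := by
    intro a b
    have h1 := M_lip hθc hD0 hθper' hθlip a b
    have h2 : |g a - g b| ≤ C * |a - b| := by
      simp only [hgdef]
      have h4 := M_lip hθ'c hD0 hθ'per hθ'lip (-a) (-b)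
      have he : |(-a) - (-b)| = |a - b| := by rw [neg_sub_neg, abs_sub_comm]
      rw [he] at h4
      calc |-(M θ' (-a)) - -(M θ' (-b))| = |M θ' (-b) - M θ' (-a)| := by ring_nf
        _ = |M θ' (-a) - M θ' (-b)| := abs_sub_comm _ _
        _ ≤ C * |a - b| := h4
    calc |G a - G b| = |((M θ a - M θ b) + (g a - g b))/2| := by simp only [hGdef]; ring_nf
      _ ≤ (|M θ a - M θ b| + |g a - g b|)/2 := by
          rw [abs_div]
          have := abs_add_le (M θ a - M θ b) (g a - g b)
          rw [abs_of_pos (by norm_num : (0:ℝ) < 2)]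
          linarith
      _ ≤ C * |a - b| := by linarith
  have hGcont : Continuous G := by
    apply (LipschitzWith.of_dist_le_mul (K := C.toNNReal) (f := G) ?_).continuous
    intro a b
    rw [Real.dist_eq, Real.dist_eq, Real.coe_toNNReal C hC0]
    exact hGlip a b
  -- uniform gap δ0
  set u : ℝ → ℝ := fun t => π/2 - |G t - θ t| with hudef
  have hucont : Continuous u := by
    simp only [hudef]
    exact continuous_const.sub (continuous_abs.comp (hGcont.sub hθc))
  have huper : Function.Periodic u (2*π) := by
    intro t
    simp only [hudef]
    rw [hGper, hθper']
    ring_nf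
  clear_value u
  obtain ⟨y0, hy0mem, hy0min⟩ :=
    isCompact_Icc.exists_isMinOn (α := ℝ) ⟨0, le_refl 0, by positivity⟩
      (hucont.continuousOn (s := Set.Icc 0 (2*π)))
  set δ0 : ℝ := u y0 with hδ0def
  have hδ0pos : 0 < δ0 := by
    rw [hδ0def]
    simp only [hudef]
    have := hGclose y0; linarith
  clear_value δ0
  have hδ0 : ∀ t, |G t - θ t| ≤ π/2 - δ0 := by
    intro t
    obtain ⟨y, hy, hyeq⟩ := huper.exists_mem_Ico₀ (by positivity) t
    have h1 : δ0 ≤ u t := by rw [hyeq, hδ0def]; exact hy0min ⟨hy.1, le_of_lt hy.2⟩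
    simp only [hudef] at h1; linarith
  -- choose the radius r
  set r : ℝ := min (π/2) (δ0 / (4*(C+1))) with hrdef
  have hrpos : 0 < r := lt_min (by positivity) (div_pos hδ0pos (by linarith))
  have hrle : r ≤ π/2 := min_le_left _ _
  have hrC : C * r ≤ δ0/4 := by
    have h1 : r ≤ δ0 / (4*(C+1)) := min_le_right _ _
    have h2 : C * r ≤ C * (δ0 / (4*(C+1))) := mul_le_mul_of_nonneg_left h1 hC0
    have h3 : C * (δ0 / (4*(C+1))) ≤ δ0/4 := by
      rw [← mul_div_assoc, div_le_div_iff₀ (by linarith) (by norm_num)]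
      nlinarith
    linarith
  clear_value r
  -- the kernel exponent n
  set q : ℝ := (1 + Real.cos r) / (1 + Real.cos (r/2)) with hqdef
  have hBpos : (0:ℝ) < 1 + Real.cos (r/2) := by
    have h1 : 0 ≤ Real.cos (r/2) :=
      Real.cos_nonneg_of_mem_Icc ⟨by linarith, by linarith⟩
    linarith
  have hAnn : (0:ℝ) ≤ 1 + Real.cos r := by linarith [Real.neg_one_le_cos r]
  have hcoslt : Real.cos r < Real.cos (r/2) :=
    Real.cos_lt_cos_of_nonneg_of_le_pi (by linarith) (by linarith) (by linarith)
  have hq1 : q < 1 := by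
    rw [hqdef, div_lt_one hBpos]; linarith
  have hqnn : 0 ≤ q := by rw [hqdef]; exact div_nonneg hAnn hBpos.le
  clear_value q
  have hden : (0:ℝ) < 8*π^2*(C+1) := by
    have : (0:ℝ) < π^2 := by positivity
    nlinarith
  obtain ⟨n, hn⟩ := exists_pow_lt_of_lt_one
    (show (0:ℝ) < δ0 * r / (8*π^2*(C+1)) from div_pos (mul_pos hδ0pos hrpos) hden) hq1
  have hqpow : (1 + Real.cos r)^n = q^n * (1 + Real.cos (r/2))^n := by
    rw [← mul_pow]
    congr 1
    rw [hqdef]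
    field_simp
  -- the kernel
  set W : ℝ → ℝ := fun s => (1 + Real.cos s)^n with hWdef
  have hWcont : Continuous W := by
    simp only [hWdef]; exact (continuous_const.add Real.continuous_cos).pow n
  have hWnn : ∀ s, 0 ≤ W s := by
    intro s; simp only [hWdef]
    exact pow_nonneg (by linarith [Real.neg_one_le_cos s]) n
  have hWper : Function.Periodic W (2*π) := by
    intro s; simp only [hWdef]; rw [Real.cos_add_two_pi]
  clear_value W
  set I : ℝ := ∫ s in (-π)..π, W s with hIdef
  have hWlow : ∀ s ∈ Set.Icc (-(r/2)) (r/2), (1 + Real.cos (r/2))^n ≤ W s := by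
    intro s hs
    simp only [hWdef]
    apply pow_le_pow_left₀ hBpos.le
    have h1 : Real.cos (r/2) ≤ Real.cos s := by
      rw [← Real.cos_abs s]
      exact Real.cos_le_cos_of_nonneg_of_le_pi (abs_nonneg s) (by linarith)
        (abs_le.mpr ⟨hs.1, hs.2⟩)
    linarith
  have hIlow : r * (1 + Real.cos (r/2))^n ≤ I := by
    have h1 : (∫ _ in (-(r/2))..(r/2), ((1 + Real.cos (r/2))^n : ℝ)) ≤
        ∫ s in (-(r/2))..(r/2), W s :=
      intervalIntegral.integral_mono_on (by linarith)
        (continuous_const.intervalIntegrable _ _) (hWcont.intervalIntegrable _ _) hWlow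
    have h2 : (∫ _ in (-(r/2))..(r/2), ((1 + Real.cos (r/2))^n : ℝ))
        = r * (1 + Real.cos (r/2))^n := by
      rw [intervalIntegral.integral_const, smul_eq_mul]
      ring_nf
    have h3 : (∫ s in (-(r/2))..(r/2), W s) ≤ I := by
      rw [hIdef]
      exact intervalIntegral.integral_mono_interval (by linarith) (by linarith) (by linarith)
        (Filter.Eventually.of_forall hWnn) (hWcont.intervalIntegrable _ _)
    linarith
  have hIpos : 0 < I :=
    lt_of_lt_of_le (mul_pos hrpos (pow_pos hBpos n)) hIlow
  clear_value I
  -- pointwise bound for W s * |s|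
  have hWabs_pt : ∀ s ∈ Set.Icc (-π) π, W s * |s| ≤ r * W s + π * (1 + Real.cos r)^n := by
    intro s hs
    have hpn : (0:ℝ) ≤ π * (1 + Real.cos r)^n := mul_nonneg hπ.le (pow_nonneg hAnn n)
    rcases le_or_gt (|s|) r with hc | hc
    · have h1 : W s * |s| ≤ W s * r := mul_le_mul_of_nonneg_left hc (hWnn s)
      nlinarith [hWnn s]
    · have habs : |s| ≤ π := abs_le.mpr ⟨hs.1, hs.2⟩
      have h1 : Real.cos s ≤ Real.cos r := by
        rw [← Real.cos_abs s]
        exact Real.cos_le_cos_of_nonneg_of_le_pi hrpos.le habs hc.le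
      have h2 : W s ≤ (1 + Real.cos r)^n := by
        simp only [hWdef]
        exact pow_le_pow_left₀ (by linarith [Real.neg_one_le_cos s]) (by linarith) n
      have h3 : W s * |s| ≤ (1 + Real.cos r)^n * π :=
        mul_le_mul h2 habs (abs_nonneg s) (pow_nonneg hAnn n)
      have h4 : 0 ≤ r * W s := mul_nonneg hrpos.le (hWnn s)
      linarith
  have hWabs : (∫ s in (-π)..π, W s * |s|) ≤ r * I + 2*π^2 * (1 + Real.cos r)^n := by
    have h1 : (∫ s in (-π)..π, W s * |s|)
        ≤ ∫ s in (-π)..π, (r * W s + π * (1 + Real.cos r)^n) :=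
      intervalIntegral.integral_mono_on (by linarith)
      ((hWcont.mul continuous_abs).intervalIntegrable (-π) π)
      (((continuous_const.mul hWcont).add continuous_const).intervalIntegrable (-π) π) hWabs_pt
    have h2 : (∫ s in (-π)..π, (r * W s + π * (1 + Real.cos r)^n))
        = r * I + 2*π^2 * (1 + Real.cos r)^n := by
      rw [intervalIntegral.integral_add (f := fun s => r * W s) (g := fun _ => π * (1 + Real.cos r)^n) ((continuous_const.mul hWcont).intervalIntegrable _ _)
        (continuous_const.intervalIntegrable _ _),
        intervalIntegral.integral_const_mul, intervalIntegral.integral_const, ← hIdef,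
        smul_eq_mul]
      ring
    rw [h2] at h1
    exact h1
  -- the smoothed function
  set Jf : ℝ → ℝ := fun x => ∫ s in (-π)..π, W s * G (x - s) with hJdef
  set φ0 : ℝ → ℝ := fun x => Jf x / I with hφ0def
  clear_value Jf φ0
  have hcontsub : ∀ x : ℝ, Continuous (fun s : ℝ => W s * G (x - s)) :=
    fun x => hWcont.mul (hGcont.comp (continuous_const.sub continuous_id))
  -- closeness of φ0 to G
  have hφ0close : ∀ x, |φ0 x - G x| ≤ δ0/2 := by
    intro x
    have e1 : (∫ s in (-π)..π, W s * G x) = I * G x := by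
      rw [intervalIntegral.integral_mul_const, ← hIdef]
    have hsub : Jf x - I * G x = ∫ s in (-π)..π, W s * (G (x - s) - G x) := by
      simp only [hJdef]
      rw [← e1,
        ← intervalIntegral.integral_sub (f := fun s => W s * G (x - s)) (g := fun s => W s * G x) ((hcontsub x).intervalIntegrable _ _)
          ((hWcont.mul continuous_const).intervalIntegrable _ _)]
      congr 1
      funext s
      ring
    have habs : |Jf x - I * G x| ≤ ∫ s in (-π)..π, C * (W s * |s|) := by
      rw [hsub]
      calc |∫ s in (-π)..π, W s * (G (x - s) - G x)|
          ≤ ∫ s in (-π)..π, |W s * (G (x - s) - G x)| :=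
            intervalIntegral.abs_integral_le_integral_abs (by linarith)
        _ ≤ ∫ s in (-π)..π, C * (W s * |s|) := by
            apply intervalIntegral.integral_mono_on (f := fun s => |W s * (G (x - s) - G x)|) (g := fun s => C * (W s * |s|)) (by linarith)
              ((hWcont.mul ((hGcont.comp (continuous_const.sub continuous_id)).sub
                continuous_const)).abs.intervalIntegrable _ _)
              ((continuous_const.mul (hWcont.mul continuous_abs)).intervalIntegrable _ _)
            intro s _
            rw [abs_mul, abs_of_nonneg (hWnn s)]
            have hG1 : |G (x - s) - G x| ≤ C * |s| := by
              have := hGlip (x - s) x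
              have he : |x - s - x| = |s| := by
                rw [show x - s - x = -s by ring, abs_neg]
              rw [he] at this
              exact this
            calc W s * |G (x - s) - G x| ≤ W s * (C * |s|) :=
                  mul_le_mul_of_nonneg_left hG1 (hWnn s)
              _ = C * (W s * |s|) := by ring
    have h2 : (∫ s in (-π)..π, C * (W s * |s|)) = C * ∫ s in (-π)..π, W s * |s| :=
      intervalIntegral.integral_const_mul _ _
    have h3 : |Jf x - I * G x| ≤ C * (r * I + 2*π^2*(1 + Real.cos r)^n) := by
      rw [h2] at habs
      exact le_trans habs (mul_le_mul_of_nonneg_left hWabs hC0)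
    have h4 : 2*π^2*C*(1 + Real.cos r)^n ≤ (δ0/4) * I := by
      have hP : (0:ℝ) ≤ (1 + Real.cos (r/2))^n := pow_nonneg hBpos.le n
      have h5 : 2*π^2*C*(1 + Real.cos r)^n = (2*π^2*C) * q^n * (1 + Real.cos (r/2))^n := by
        rw [hqpow]; ring
      have h6 : (2*π^2*C) * q^n * (1 + Real.cos (r/2))^n
          ≤ (2*π^2*C) * (δ0 * r / (8*π^2*(C+1))) * (1 + Real.cos (r/2))^n := by
        apply mul_le_mul_of_nonneg_right _ hP
        apply mul_le_mul_of_nonneg_left hn.le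
        positivity
      have h7 : (2*π^2*C) * (δ0 * r / (8*π^2*(C+1))) ≤ (δ0/4) * r := by
        rw [mul_div_assoc', div_le_iff₀ hden]
        have hπ2 : (0:ℝ) < π^2 := by positivity
        nlinarith [mul_pos hδ0pos hrpos, mul_pos (mul_pos hδ0pos hrpos) hπ2]
      have h8 : (2*π^2*C) * (δ0 * r / (8*π^2*(C+1))) * (1 + Real.cos (r/2))^n
          ≤ ((δ0/4) * r) * (1 + Real.cos (r/2))^n :=
        mul_le_mul_of_nonneg_right h7 hP
      have h9 : ((δ0/4) * r) * (1 + Real.cos (r/2))^n ≤ (δ0/4) * I := by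
        have := mul_le_mul_of_nonneg_left hIlow (by linarith : (0:ℝ) ≤ δ0/4)
        nlinarith
      linarith
    have h10 : |Jf x - I * G x| ≤ (δ0/2) * I := by
      have : C * (r * I + 2*π^2*(1 + Real.cos r)^n)
          = (C * r) * I + 2*π^2*C*(1 + Real.cos r)^n := by ring
      rw [this] at h3
      have h11 : (C * r) * I ≤ (δ0/4) * I := mul_le_mul_of_nonneg_right hrC hIpos.le
      nlinarith
    have he : φ0 x - G x = (Jf x - I * G x)/I := by
      simp only [hφ0def]
      field_simp
    rw [he, abs_div, abs_of_pos hIpos, div_le_iff₀ hIpos]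
    calc |Jf x - I * G x| ≤ (δ0/2) * I := h10
      _ = δ0/2 * I := rfl
  -- monotonicity
  have hφ0mono : Monotone φ0 := by
    intro a b hab
    have hJ : Jf a ≤ Jf b := by
      simp only [hJdef]
      apply intervalIntegral.integral_mono_on (by linarith)
        ((hcontsub a).intervalIntegrable _ _) ((hcontsub b).intervalIntegrable _ _)
      intro s _
      exact mul_le_mul_of_nonneg_left (hGmono (by linarith : a - s ≤ b - s)) (hWnn s)
    simp only [hφ0def]
    rw [div_le_div_iff₀ hIpos hIpos]
    nlinarith [hJ, hIpos]
  -- periodicity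
  have hJper : ∀ x, Jf (x + 2*π) = Jf x + 2*π*(deg:ℝ) * I := by
    intro x
    simp only [hJdef]
    have he : ∀ s : ℝ, W s * G (x + 2*π - s) = W s * G (x - s) + (2*π*(deg:ℝ)) * W s := by
      intro s
      rw [show x + 2*π - s = (x - s) + 2*π by ring, hGper]
      ring
    rw [intervalIntegral.integral_congr (fun s _ => he s),
      intervalIntegral.integral_add (f := fun s => W s * G (x - s)) (g := fun s => 2*π*(deg:ℝ) * W s) ((hcontsub x).intervalIntegrable _ _)
        ((continuous_const.mul hWcont).intervalIntegrable _ _),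
      intervalIntegral.integral_const_mul, ← hIdef]
  have hφ0per : ∀ x, φ0 (x + 2*π) = φ0 x + 2*π*(deg:ℝ) := by
    intro x
    simp only [hφ0def]
    rw [hJper]
    field_simp
  -- smoothness (analyticity): φ0 is a trigonometric polynomial plus a linear term
  set p : ℝ → ℝ := fun t => G t - (deg:ℝ) * t with hpdef
  have hpcont : Continuous p := by
    simp only [hpdef]; exact hGcont.sub (continuous_const.mul continuous_id)
  have hpper : Function.Periodic p (2*π) := by
    intro t; simp only [hpdef]; rw [hGper]; ring
  clear_value p
  have hW_expand : ∀ x u : ℝ, W (x - u) = ∑ k ∈ Finset.range (n+1), ∑ j ∈ Finset.range (k+1),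
      ((n.choose k : ℝ) * (k.choose j : ℝ) * ((Real.cos x)^j * (Real.sin x)^(k-j))) *
        ((Real.cos u)^j * (Real.sin u)^(k-j)) := by
    intro x u
    simp only [hWdef]
    rw [Real.cos_sub]
    rw [show (1 + (Real.cos x * Real.cos u + Real.sin x * Real.sin u))
      = (Real.cos x * Real.cos u + Real.sin x * Real.sin u) + 1 by ring]
    rw [add_pow]
    apply Finset.sum_congr rfl
    intro k _
    rw [add_pow, Finset.sum_mul, Finset.sum_mul]
    apply Finset.sum_congr rfl
    intro j _
    rw [mul_pow, mul_pow]
    ring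
  have hJrep : ∀ x, Jf x = ((deg:ℝ)*x) * I - (deg:ℝ) * (∫ s in (-π)..π, W s * s)
      + ∑ k ∈ Finset.range (n+1), ∑ j ∈ Finset.range (k+1),
        ((n.choose k : ℝ) * (k.choose j : ℝ) * ((Real.cos x)^j * (Real.sin x)^(k-j))) *
          (∫ u in (-π)..π, ((Real.cos u)^j * (Real.sin u)^(k-j)) * p u) := by
    intro x
    have i1 : IntervalIntegrable (fun s => ((deg:ℝ)*x) * W s) volume (-π) π :=
      (continuous_const.mul hWcont).intervalIntegrable _ _
    have i2 : IntervalIntegrable (fun s => (deg:ℝ) * (W s * s)) volume (-π) π :=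
      (continuous_const.mul (hWcont.mul continuous_id)).intervalIntegrable _ _
    have i3 : IntervalIntegrable (fun s => W s * p (x - s)) volume (-π) π :=
      (hWcont.mul (hpcont.comp (continuous_const.sub continuous_id))).intervalIntegrable _ _
    have e2 : (∫ s in (-π)..π, W s * p (x - s)) = ∫ u in (-π)..π, W (x - u) * p u := by
      have e3 : ∀ s : ℝ, W s * p (x - s) = (fun u => W (x - u) * p u) (x - s) := by
        intro s
        simp only
        rw [sub_sub_cancel]
      rw [intervalIntegral.integral_congr (fun s _ => e3 s),
        intervalIntegral.integral_comp_sub_left (fun u => W (x - u) * p u) x]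
      have hHper : Function.Periodic (fun u => W (x - u) * p u) (2*π) := by
        intro v
        simp only
        rw [show x - (v + 2*π) = (x - v) - 2*π by ring, hWper.sub_eq, hpper v]
      have h5 := hHper.intervalIntegral_add_eq (x - π) (-π)
      rw [show x - π + 2*π = x + π by ring, show -π + 2*π = π by ring] at h5
      rw [show x - -π = x + π by ring]
      exact h5
    have e5 : ∀ u : ℝ, W (x - u) * p u = ∑ k ∈ Finset.range (n+1), ∑ j ∈ Finset.range (k+1),
        ((n.choose k : ℝ) * (k.choose j : ℝ) * ((Real.cos x)^j * (Real.sin x)^(k-j))) *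
          (((Real.cos u)^j * (Real.sin u)^(k-j)) * p u) := by
      intro u
      rw [hW_expand x u, Finset.sum_mul]
      apply Finset.sum_congr rfl
      intro k _
      rw [Finset.sum_mul]
      apply Finset.sum_congr rfl
      intro j _
      ring
    have e6 : (∫ u in (-π)..π, W (x - u) * p u) = ∑ k ∈ Finset.range (n+1),
        ∑ j ∈ Finset.range (k+1),
        ((n.choose k : ℝ) * (k.choose j : ℝ) * ((Real.cos x)^j * (Real.sin x)^(k-j))) *
          (∫ u in (-π)..π, ((Real.cos u)^j * (Real.sin u)^(k-j)) * p u) := by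
      rw [intervalIntegral.integral_congr (fun u _ => e5 u)]
      rw [intervalIntegral.integral_finset_sum]
      · apply Finset.sum_congr rfl
        intro k _
        rw [intervalIntegral.integral_finset_sum]
        · apply Finset.sum_congr rfl
          intro j _
          exact intervalIntegral.integral_const_mul _ _
        · intro j _
          exact (continuous_const.mul (((Real.continuous_cos.pow j).mul
            (Real.continuous_sin.pow (k-j))).mul hpcont)).intervalIntegrable _ _
      · intro k _
        apply Continuous.intervalIntegrable
        apply continuous_finset_sum
        intro j _
        exact continuous_const.mul (((Real.continuous_cos.pow j).mul
          (Real.continuous_sin.pow (k-j))).mul hpcont)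
    calc Jf x = ∫ s in (-π)..π, (((deg:ℝ)*x) * W s - (deg:ℝ) * (W s * s) + W s * p (x - s)) := by
          simp only [hJdef]
          apply intervalIntegral.integral_congr
          intro s _
          simp only [hpdef]
          ring
      _ = (∫ s in (-π)..π, (((deg:ℝ)*x) * W s - (deg:ℝ) * (W s * s)))
            + ∫ s in (-π)..π, W s * p (x - s) := intervalIntegral.integral_add (i1.sub i2) i3
      _ = ((∫ s in (-π)..π, ((deg:ℝ)*x) * W s) - ∫ s in (-π)..π, (deg:ℝ) * (W s * s))
            + ∫ s in (-π)..π, W s * p (x - s) := by rw [intervalIntegral.integral_sub i1 i2]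
      _ = ((deg:ℝ)*x) * I - (deg:ℝ) * (∫ s in (-π)..π, W s * s)
            + ∫ s in (-π)..π, W s * p (x - s) := by
          rw [intervalIntegral.integral_const_mul, intervalIntegral.integral_const_mul, ← hIdef]
      _ = ((deg:ℝ)*x) * I - (deg:ℝ) * (∫ s in (-π)..π, W s * s)
            + ∑ k ∈ Finset.range (n+1), ∑ j ∈ Finset.range (k+1),
              ((n.choose k : ℝ) * (k.choose j : ℝ) * ((Real.cos x)^j * (Real.sin x)^(k-j))) *
                (∫ u in (-π)..π, ((Real.cos u)^j * (Real.sin u)^(k-j)) * p u) := by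
          rw [e2, e6]
  have hφ0smooth : ContDiff ℝ (⊤ : ℕ∞) φ0 := by
    have hrepfun : φ0 = fun x => (((deg:ℝ)*x) * I - (deg:ℝ) * (∫ s in (-π)..π, W s * s)
        + ∑ k ∈ Finset.range (n+1), ∑ j ∈ Finset.range (k+1),
          ((n.choose k : ℝ) * (k.choose j : ℝ) * ((Real.cos x)^j * (Real.sin x)^(k-j))) *
            (∫ u in (-π)..π, ((Real.cos u)^j * (Real.sin u)^(k-j)) * p u)) / I := by
      funext x
      simp only [hφ0def]
      rw [hJrep x]
    rw [hrepfun]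
    apply ContDiff.div_const
    apply ContDiff.add
    · exact ((contDiff_const.mul contDiff_id).mul contDiff_const).sub contDiff_const
    · apply ContDiff.sum
      intro k _
      apply ContDiff.sum
      intro j _
      exact (contDiff_const.mul ((Real.contDiff_cos.pow j).mul
        (Real.contDiff_sin.pow (k-j)))).mul contDiff_const
  -- bound on the periodic part of φ0 relative to the line deg·t
  set ψ : ℝ → ℝ := fun t => (deg:ℝ) * t - φ0 t with hψdef
  have hψcont : Continuous ψ := by
    simp only [hψdef]
    exact (continuous_const.mul continuous_id).sub hφ0smooth.continuous
  have hψper : Function.Periodic ψ (2*π) := by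
    intro t
    simp only [hψdef]
    rw [hφ0per]; ring
  clear_value ψ
  obtain ⟨z0, hz0mem, hz0max⟩ :=
    isCompact_Icc.exists_isMaxOn (α := ℝ) ⟨0, le_refl 0, by positivity⟩
      ((continuous_abs.comp hψcont).continuousOn (s := Set.Icc 0 (2*π)))
  set B : ℝ := |ψ z0| with hBdef
  have hB0 : 0 ≤ B := abs_nonneg _
  clear_value B
  have hψB : ∀ t, |ψ t| ≤ B := by
    intro t
    obtain ⟨y, hy, hyeq⟩ := hψper.exists_mem_Ico₀ (by positivity) t
    rw [hyeq, hBdef]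
    exact hz0max ⟨hy.1, le_of_lt hy.2⟩
  -- the final function
  set ε : ℝ := min (δ0 / (2*(B+1))) (1/2) with hεdef
  have hεpos : 0 < ε := lt_min (div_pos hδ0pos (by linarith)) (by norm_num)
  have hεhalf : ε ≤ 1/2 := min_le_right _ _
  have hεB : ε * B < δ0 / 2 := by
    have h1 : ε ≤ δ0 / (2*(B+1)) := min_le_left _ _
    have h2 : ε * B ≤ δ0 / (2*(B+1)) * B :=
      mul_le_mul_of_nonneg_right h1 hB0
    have h3 : δ0 / (2*(B+1)) * B < δ0 / 2 := by
      rw [div_mul_eq_mul_div, div_lt_div_iff₀ (by linarith) (by norm_num)]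
      nlinarith
    linarith
  clear_value ε
  refine ⟨fun t => (1 - ε) * φ0 t + ε * ((deg:ℝ) * t), ?_, ?_, ?_, ?_⟩
  · exact (contDiff_const.mul hφ0smooth).add
      (contDiff_const.mul (contDiff_const.mul contDiff_id))
  · intro t
    simp only [hφ0per]
    push_cast
    ring
  · -- derivative positivity
    have hφ0d : ∀ t, 0 ≤ deriv φ0 t := by
      intro t
      have hder : HasDerivAt φ0 (deriv φ0 t) t :=
        (hφ0smooth.differentiable (by simp) t).hasDerivAt
      have hslope : Filter.Tendsto (slope φ0 t) (nhdsWithin t (Set.Ioi t))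
          (nhds (deriv φ0 t)) := by
        apply Filter.Tendsto.mono_left (hasDerivAt_iff_tendsto_slope.mp hder)
        apply nhdsWithin_mono
        intro x hx
        exact ne_of_gt hx
      refine ge_of_tendsto hslope ?_
      filter_upwards [self_mem_nhdsWithin] with x hx
      have hx' : t < x := hx
      rw [slope_def_field]
      apply div_nonneg
      · have := hφ0mono (le_of_lt hx'); linarith
      · linarith
    intro t
    have h1 : HasDerivAt (fun t => (1 - ε) * φ0 t + ε * ((deg:ℝ) * t))
        ((1 - ε) * deriv φ0 t + ε * (deg:ℝ)) t := by
      have ha : HasDerivAt (fun t => (1 - ε) * φ0 t) ((1 - ε) * deriv φ0 t) t :=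
        ((hφ0smooth.differentiable (by simp) t).hasDerivAt).const_mul _
      have hb : HasDerivAt (fun t : ℝ => ε * ((deg:ℝ) * t)) (ε * (deg:ℝ)) t := by
        simpa using ((hasDerivAt_id t).const_mul (deg:ℝ)).const_mul ε
      exact ha.add hb
    rw [h1.deriv]
    have := hφ0d t
    nlinarith
  · intro t
    have hdec : (1 - ε) * φ0 t + ε * ((deg:ℝ) * t) - θ t
        = (G t - θ t) + (φ0 t - G t) + ε * ψ t := by
      simp only [hψdef]; ring
    rw [hdec]
    calc |(G t - θ t) + (φ0 t - G t) + ε * ψ t|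
        ≤ |G t - θ t| + |φ0 t - G t| + |ε * ψ t| := abs_add_three _ _ _
      _ ≤ (π/2 - δ0) + δ0/2 + ε * B := by
          have h1 := hδ0 t
          have h2 := hφ0close t
          have h3 : |ε * ψ t| ≤ ε * B := by
            rw [abs_mul, abs_of_pos hεpos]
            exact mul_le_mul_of_nonneg_left (hψB t) (le_of_lt hεpos)
          linarith
      _ < π / 2 := by linarith
end
end

section
/- Let M be a 3-manifold, α a contact form on M, and Γ a finite group of diffeomorphisms of M such that for every γ ∈ Γ: γ preserves a fixed non-vanishing vector field X positively transverse to ker α with R_α = λX for a positive function λ, and dγ preserves orientation on a plane field transverse to X. Then the averaged 1-form ᾱ := (1/|Γ|) Σ_{γ∈Γ} γ*α is a Γ-invariant contact form whose Reeb vector field is a positive multiple of X. -/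
noncomputable section

open MeasureTheory

/-- Euclidean 3-space. -/
abbrev E3 : Type := ℝ × ℝ × ℝ

/-- Exterior derivative of a 1-form:
`dα(x)(u,v) = ∂_u (α(·)(v))(x) - ∂_v (α(·)(u))(x)`. -/
def dOne (α : E3 → E3 →L[ℝ] ℝ) (x u v : E3) : ℝ :=
  fderiv ℝ (fun y => α y v) x u - fderiv ℝ (fun y => α y u) x v

/-- Wedge product of two 1-forms. -/
def wedge11 (α β : E3 → E3 →L[ℝ] ℝ) (x u v : E3) : ℝ :=
  α x u * β x v - α x v * β x u

/-- Wedge product of a 1-form with a 2-form; in particular `α ∧ dα` is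
`wedge12 α (dOne α)`. -/
def wedge12 (α : E3 → E3 →L[ℝ] ℝ) (ω : E3 → E3 → E3 → ℝ) (x u v w : E3) : ℝ :=
  α x u * ω x v w - α x v * ω x u w + α x w * ω x u v

def e1 : E3 := (1, 0, 0)
def e2 : E3 := (0, 1, 0)
def e3 : E3 := (0, 0, 1)

/-- Invariance under the lattice `2π ℤ³`: objects on the torus `T³ = ℝ³/(2πℤ)³`
are modelled as lattice-periodic objects on `ℝ³`. -/
def Periodic3 {β : Type*} (f : E3 → β) : Prop :=
  ∀ x : E3, f (x + (2 * Real.pi, 0, 0)) = f x ∧ f (x + (0, 2 * Real.pi, 0)) = f x ∧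
    f (x + (0, 0, 2 * Real.pi)) = f x

/-- A fundamental domain of the torus `T³`. -/
def cube : Set E3 :=
  Set.Icc 0 (2 * Real.pi) ×ˢ (Set.Icc 0 (2 * Real.pi) ×ˢ Set.Icc 0 (2 * Real.pi))

/-- Pullback of a 1-form by a smooth map. -/
def pullOne (g : E3 → E3) (α : E3 → E3 →L[ℝ] ℝ) : E3 → E3 →L[ℝ] ℝ :=
  fun p => (α (g p)).comp (fderiv ℝ g p)

/-- The average of the pullbacks of `α` under a finite group `G` acting by `ρ`. -/
def avgForm (G : Type) [Fintype G] (ρ : G → E3 → E3) (α : E3 → E3 →L[ℝ] ℝ) :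
    E3 → E3 →L[ℝ] ℝ :=
  fun p => ((Fintype.card G : ℝ)⁻¹) • ∑ g : G, pullOne (ρ g) α p


section Helpers

lemma pull_smooth (g : E3 → E3) (hg : ContDiff ℝ (⊤ : ℕ∞) g) (β : E3 → E3 →L[ℝ] ℝ)
    (hβ : ContDiff ℝ (⊤ : ℕ∞) β) : ContDiff ℝ (⊤ : ℕ∞) (pullOne g β) :=
  (hβ.comp hg).clm_comp (hg.fderiv_right (by simp))

lemma avg_smooth (G : Type) [Fintype G] (ρ : G → E3 → E3) (hρsm : ∀ g, ContDiff ℝ (⊤ : ℕ∞) (ρ g))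
    (α : E3 → E3 →L[ℝ] ℝ) (hα : ContDiff ℝ (⊤ : ℕ∞) α) : ContDiff ℝ (⊤ : ℕ∞) (avgForm G ρ α) :=
  ContDiff.const_smul _ (ContDiff.sum fun g _ => pull_smooth (ρ g) (hρsm g) α hα)

lemma dOne_eq (β : E3 → E3 →L[ℝ] ℝ) (hβ : ContDiff ℝ (⊤ : ℕ∞) β) (q u v : E3) :
    dOne β q u v = fderiv ℝ β q u v - fderiv ℝ β q v u := by
  have hq : DifferentiableAt ℝ β q := (hβ.differentiable (by simp)).differentiableAt
  have h : ∀ w, fderiv ℝ (fun y => β y w) q = (fderiv ℝ β q).flip w := by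
    intro w
    rw [fderiv_clm_apply hq (differentiableAt_const w)]
    simp
  simp [dOne, h]

lemma dOne_smul_fst (β : E3 → E3 →L[ℝ] ℝ) (hβ : ContDiff ℝ (⊤ : ℕ∞) β) (q : E3) (s : ℝ)
    (u w : E3) : dOne β q (s • u) w = s * dOne β q u w := by
  rw [dOne_eq β hβ, dOne_eq β hβ]
  simp [_root_.map_smul]
  ring

lemma dOne_fst_expand (β : E3 → E3 →L[ℝ] ℝ) (hβ : ContDiff ℝ (⊤ : ℕ∞) β) (p : E3)
    (x1 x2 x3 : ℝ) (w : E3) :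
    dOne β p (x1 • e1 + x2 • e2 + x3 • e3) w
      = x1 * dOne β p e1 w + x2 * dOne β p e2 w + x3 * dOne β p e3 w := by
  simp only [dOne_eq β hβ, map_add, _root_.map_smul, ContinuousLinearMap.add_apply,
    ContinuousLinearMap.coe_smul', Pi.smul_apply, smul_eq_mul]
  ring

lemma dOne_antisymm (β : E3 → E3 →L[ℝ] ℝ) (p u v : E3) :
    dOne β p u v = -dOne β p v u := by
  simp only [dOne]; ring

lemma dOne_pull (g : E3 → E3) (hg : ContDiff ℝ (⊤ : ℕ∞) g) (β : E3 → E3 →L[ℝ] ℝ)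
    (hβ : ContDiff ℝ (⊤ : ℕ∞) β) (p u v : E3) :
    dOne (pullOne g β) p u v
      = dOne β (g p) (fderiv ℝ g p u) (fderiv ℝ g p v) := by
  have hβg : DifferentiableAt ℝ (fun y => β (g y)) p :=
    ((hβ.comp hg).differentiable (by simp)) p
  have hDg : DifferentiableAt ℝ (fderiv ℝ g) p :=
    ((hg.fderiv_right (m := 1) (by exact WithTop.coe_le_coe.mpr le_top)).differentiable one_ne_zero) p
  have hDv : ∀ w : E3, DifferentiableAt ℝ (fun y => fderiv ℝ g y w) p :=
    fun w => hDg.clm_apply (differentiableAt_const w)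
  have key : ∀ w u₀ : E3, fderiv ℝ (fun y => β (g y) (fderiv ℝ g y w)) p u₀
      = β (g p) (fderiv ℝ (fderiv ℝ g) p u₀ w)
        + fderiv ℝ β (g p) (fderiv ℝ g p u₀) (fderiv ℝ g p w) := by
    intro w u₀
    rw [fderiv_clm_apply hβg (hDv w)]
    have hsnd : fderiv ℝ (fun y => fderiv ℝ g y w) p
        = (fderiv ℝ (fderiv ℝ g) p).flip w := by
      rw [fderiv_clm_apply hDg (differentiableAt_const w)]
      simp
    have hcomp : fderiv ℝ (fun y => β (g y)) p
        = (fderiv ℝ β (g p)).comp (fderiv ℝ g p) := by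
      rw [show (fun y => β (g y)) = β ∘ g from rfl,
        fderiv_comp p ((hβ.differentiable (by simp)) (g p)) ((hg.differentiable (by simp)) p)]
    simp [hsnd, hcomp]
  have hsymm : fderiv ℝ (fderiv ℝ g) p u v = fderiv ℝ (fderiv ℝ g) p v u :=
    (hg.contDiffAt.isSymmSndFDerivAt (by simp; exact WithTop.coe_le_coe.mpr (le_top (a := (2:ℕ∞))))) u v
  have lhs : dOne (pullOne g β) p u v
      = fderiv ℝ (fun y => β (g y) (fderiv ℝ g y v)) p u
        - fderiv ℝ (fun y => β (g y) (fderiv ℝ g y u)) p v := rfl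
  rw [lhs, key v u, key u v, dOne_eq β hβ, hsymm]
  ring

lemma dOne_avg (G : Type) [Fintype G] (ρ : G → E3 → E3) (hρsm : ∀ g, ContDiff ℝ (⊤ : ℕ∞) (ρ g))
    (α : E3 → E3 →L[ℝ] ℝ) (hα : ContDiff ℝ (⊤ : ℕ∞) α) (p u v : E3) :
    dOne (avgForm G ρ α) p u v
      = (Fintype.card G : ℝ)⁻¹ * ∑ g : G, dOne (pullOne (ρ g) α) p u v := by
  have hdiff : ∀ (g : G) (w : E3), DifferentiableAt ℝ (fun y => pullOne (ρ g) α y w) p :=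
    fun g w => (((pull_smooth (ρ g) (hρsm g) α hα).differentiable (by simp)) p).clm_apply
      (differentiableAt_const w)
  have h : ∀ w : E3, fderiv ℝ (fun y => avgForm G ρ α y w) p
      = (Fintype.card G : ℝ)⁻¹ • ∑ g : G, fderiv ℝ (fun y => pullOne (ρ g) α y w) p := by
    intro w
    have : (fun y => avgForm G ρ α y w)
        = fun y => (Fintype.card G : ℝ)⁻¹ * ∑ g : G, pullOne (ρ g) α y w := by
      funext y; simp [avgForm]
    rw [this, fderiv_const_mul (DifferentiableAt.fun_sum fun g _ => hdiff g w),
      fderiv_fun_sum fun g _ => hdiff g w]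
  simp only [dOne, h, ContinuousLinearMap.smul_apply, ContinuousLinearMap.sum_apply,
    smul_eq_mul, Finset.mul_sum, ← Finset.sum_sub_distrib]
  exact Finset.sum_congr rfl fun g _ => by ring

lemma avg_invariant (G : Type) [Group G] [Fintype G] (ρ : G → E3 → E3)
    (hρmul : ∀ g h : G, ∀ p, ρ (g * h) p = ρ g (ρ h p))
    (hρsm : ∀ g, ContDiff ℝ (⊤ : ℕ∞) (ρ g))
    (α : E3 → E3 →L[ℝ] ℝ) (g : G) (p : E3) :
    pullOne (ρ g) (avgForm G ρ α) p = avgForm G ρ α p := by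
  have hchain : ∀ h : G, (pullOne (ρ h) α (ρ g p)).comp (fderiv ℝ (ρ g) p)
      = pullOne (ρ (h * g)) α p := by
    intro h
    have hfun : ρ (h * g) = (ρ h) ∘ (ρ g) := by funext q; exact hρmul h g q
    have : fderiv ℝ (ρ (h * g)) p = (fderiv ℝ (ρ h) (ρ g p)).comp (fderiv ℝ (ρ g) p) := by
      rw [hfun]
      exact fderiv_comp p (((hρsm h).differentiable (by simp)) (ρ g p))
        (((hρsm g).differentiable (by simp)) p)
    simp only [pullOne, this, ContinuousLinearMap.comp_assoc]
    congr 1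
    rw [hfun]; rfl
  have : pullOne (ρ g) (avgForm G ρ α) p
      = (Fintype.card G : ℝ)⁻¹ • ∑ h : G, pullOne (ρ (h * g)) α p := by
    refine ContinuousLinearMap.ext fun w => ?_
    simp only [pullOne, avgForm, ContinuousLinearMap.comp_apply,
      ContinuousLinearMap.smul_apply, ContinuousLinearMap.sum_apply, smul_eq_mul]
    congr 1
    refine Finset.sum_congr rfl fun h _ => ?_
    have hh := congrArg (fun L : E3 →L[ℝ] ℝ => L w) (hchain h)
    simpa [pullOne] using hh
  rw [this, avgForm]
  congr 1
  exact Fintype.sum_equiv (Equiv.mulRight g) _ _ fun h => rfl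

lemma key_alg (c x1 x2 x3 ω12 ω13 ω23 σ12 σ13 σ23 a1 a2 a3 A1 A2 A3 : ℝ)
    (hc : 0 < c)
    (Eω1 : x2 * ω12 + x3 * ω13 = 0) (Eω2 : x1 * ω12 - x3 * ω23 = 0)
    (Eω3 : x1 * ω13 + x2 * ω23 = 0)
    (Eσ1 : x2 * σ12 + x3 * σ13 = 0) (Eσ2 : x1 * σ12 - x3 * σ23 = 0)
    (Eσ3 : x1 * σ13 + x2 * σ23 = 0)
    (h12 : c * σ12 ^ 2 ≤ ω12 * σ12) (h13 : c * σ13 ^ 2 ≤ ω13 * σ13)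
    (h23 : c * σ23 ^ 2 ≤ ω23 * σ23)
    (hS : A1 * σ23 - A2 * σ13 + A3 * σ12 ≠ 0)
    (ha : 0 < a1 * x1 + a2 * x2 + a3 * x3)
    (hx : ¬(x1 = 0 ∧ x2 = 0 ∧ x3 = 0)) :
    a1 * ω23 - a2 * ω13 + a3 * ω12 ≠ 0 := by
  obtain ⟨xk, hxk, t, s, hω, hσ, hsgn⟩ :
      ∃ xk, xk ≠ 0 ∧ ∃ t s, (ω23 = t * x1 ∧ ω13 = -(t * x2) ∧ ω12 = t * x3)
        ∧ (σ23 = s * x1 ∧ σ13 = -(s * x2) ∧ σ12 = s * x3)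
        ∧ c * (s * xk) ^ 2 ≤ (t * xk) * (s * xk) := by
    by_cases h1 : x1 ≠ 0
    · refine ⟨x1, h1, ω23 / x1, σ23 / x1, ⟨by field_simp, ?_, ?_⟩, ⟨by field_simp, ?_, ?_⟩, ?_⟩
      · field_simp; linarith [Eω3]
      · field_simp; linarith [Eω2]
      · field_simp; linarith [Eσ3]
      · field_simp; linarith [Eσ2]
      · have h : (ω23 / x1 * x1) = ω23 := by field_simp
        have h2 : (σ23 / x1 * x1) = σ23 := by field_simp
        rw [h, h2]; exact h23
    · push_neg at h1
      by_cases h2 : x2 ≠ 0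
      · refine ⟨x2, h2, -ω13 / x2, -σ13 / x2, ⟨?_, by field_simp, ?_⟩,
          ⟨?_, by field_simp, ?_⟩, ?_⟩
        · field_simp; linarith [Eω3]
        · field_simp; linarith [Eω1]
        · field_simp; linarith [Eσ3]
        · field_simp; linarith [Eσ1]
        · have h : (-ω13 / x2 * x2) = -ω13 := by field_simp
          have hh : (-σ13 / x2 * x2) = -σ13 := by field_simp
          rw [h, hh]; nlinarith [h13]
      · push_neg at h2
        have h3 : x3 ≠ 0 := fun h3 => hx ⟨h1, h2, h3⟩
        refine ⟨x3, h3, ω12 / x3, σ12 / x3, ⟨?_, ?_, by field_simp⟩,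
          ⟨?_, ?_, by field_simp⟩, ?_⟩
        · field_simp; linarith [Eω2]
        · field_simp; linarith [Eω1]
        · field_simp; linarith [Eσ2]
        · field_simp; linarith [Eσ1]
        · have h : (ω12 / x3 * x3) = ω12 := by field_simp
          have hh : (σ12 / x3 * x3) = σ12 := by field_simp
          rw [h, hh]; exact h12
  obtain ⟨hω23, hω13, hω12⟩ := hω
  obtain ⟨hσ23, hσ13, hσ12⟩ := hσ
  have hs : s ≠ 0 := by
    intro h; apply hS; rw [hσ23, hσ13, hσ12, h]; ring
  have ht : t ≠ 0 := by
    intro h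
    rw [h] at hsgn
    have : 0 < c * (s * xk) ^ 2 := by positivity
    nlinarith
  rw [hω23, hω13, hω12]
  have h : a1 * (t * x1) - a2 * (-(t * x2)) + a3 * (t * x3)
      = t * (a1 * x1 + a2 * x2 + a3 * x3) := by ring
  rw [h]
  exact mul_ne_zero ht (ne_of_gt ha)

end Helpers

/-- let `α` be a contact form on a 3-manifold (modelled on `ℝ³`)
and `Γ` a finite group of (smooth) diffeomorphisms such that every `γ ∈ Γ`
preserves a fixed non-vanishing vector field `X` positively transverse to
`ker α` with `R_α = λX` (`λ > 0`), and `dγ` preserves the orientation (given by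
`dα`) on plane fields transverse to `X`.  Then the averaged form
`ᾱ = (1/|Γ|) Σ_γ γ*α` is a `Γ`-invariant contact form whose Reeb vector field
is a positive multiple of `X`. -/
theorem averaged_contact_form (G : Type) [Group G] [Fintype G]
    (ρ : G → E3 → E3)
    (hρ1 : ∀ p, ρ 1 p = p)
    (hρmul : ∀ g h : G, ∀ p, ρ (g * h) p = ρ g (ρ h p))
    (hρsm : ∀ g, ContDiff ℝ (⊤ : ℕ∞) (ρ g))
    (α : E3 → E3 →L[ℝ] ℝ) (hαsm : ContDiff ℝ (⊤ : ℕ∞) α)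
    (hcontact : ∀ p, wedge12 α (dOne α) p e1 e2 e3 ≠ 0)
    (X : E3 → E3) (hXsm : ContDiff ℝ (⊤ : ℕ∞) X) (hX : ∀ p, X p ≠ 0)
    (hXtrans : ∀ p, 0 < α p (X p))
    (lam : E3 → ℝ) (hlam : ∀ p, 0 < lam p)
    (hReeb1 : ∀ p, α p (lam p • X p) = 1)
    (hReeb2 : ∀ p v, dOne α p (lam p • X p) v = 0)
    (hpresX : ∀ g p, fderiv ℝ (ρ g) p (X p) = X (ρ g p))
    (hor : ∀ g p u v,
      0 ≤ dOne α (ρ g p) (fderiv ℝ (ρ g) p u) (fderiv ℝ (ρ g) p v) * dOne α p u v) :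
    (∀ g p, pullOne (ρ g) (avgForm G ρ α) p = avgForm G ρ α p) ∧
    (∀ p, wedge12 (avgForm G ρ α) (dOne (avgForm G ρ α)) p e1 e2 e3 ≠ 0) ∧
    ∃ μ : E3 → ℝ, (∀ p, 0 < μ p) ∧
      (∀ p, avgForm G ρ α p (μ p • X p) = 1) ∧
      (∀ p v, dOne (avgForm G ρ α) p (μ p • X p) v = 0) := by
    classical
  have : Nonempty G := ⟨1⟩
  have hcard : (0:ℝ) < (Fintype.card G : ℝ) := by exact_mod_cast Fintype.card_pos
  have hcinv : (0:ℝ) < (Fintype.card G : ℝ)⁻¹ := inv_pos.mpr hcard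
  have havgsm : ContDiff ℝ (⊤ : ℕ∞) (avgForm G ρ α) := avg_smooth G ρ hρsm α hαsm
  have havg_apply : ∀ p w, avgForm G ρ α p w
      = (Fintype.card G : ℝ)⁻¹ * ∑ g : G, α (ρ g p) (fderiv ℝ (ρ g) p w) := by
    intro p w; simp [avgForm, pullOne]
  have haX : ∀ p, 0 < avgForm G ρ α p (X p) := by
    intro p
    rw [havg_apply]
    refine mul_pos hcinv (Finset.sum_pos (fun g _ => ?_) Finset.univ_nonempty)
    rw [hpresX g p]; exact hXtrans (ρ g p)
  have hiXα : ∀ q w, dOne α q (X q) w = 0 := by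
    intro q w
    have h := hReeb2 q w
    rw [dOne_smul_fst α hαsm] at h
    exact (mul_eq_zero.mp h).resolve_left (ne_of_gt (hlam q))
  have hdavg : ∀ p u v, dOne (avgForm G ρ α) p u v
      = (Fintype.card G : ℝ)⁻¹ * ∑ g : G,
          dOne α (ρ g p) (fderiv ℝ (ρ g) p u) (fderiv ℝ (ρ g) p v) := by
    intro p u v
    rw [dOne_avg G ρ hρsm α hαsm]
    congr 1
    exact Finset.sum_congr rfl fun g _ => dOne_pull (ρ g) (hρsm g) α hαsm p u v
  have hiXavg : ∀ p w, dOne (avgForm G ρ α) p (X p) w = 0 := by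
    intro p w
    rw [hdavg]
    have h : ∀ g : G,
        dOne α (ρ g p) (fderiv ℝ (ρ g) p (X p)) (fderiv ℝ (ρ g) p w) = 0 := by
      intro g; rw [hpresX g p]; exact hiXα (ρ g p) _
    simp [h]
  refine ⟨fun g p => avg_invariant G ρ hρmul hρsm α g p, ?_, ?_⟩
  · -- contactness of the average
    intro p
    have hsgn : ∀ u v : E3, (Fintype.card G : ℝ)⁻¹ * (dOne α p u v) ^ 2
        ≤ dOne (avgForm G ρ α) p u v * dOne α p u v := by
      intro u v
      rw [hdavg]
      have hid : fderiv ℝ (ρ (1:G)) p = ContinuousLinearMap.id ℝ E3 := by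
        have h : ρ (1:G) = id := funext hρ1
        rw [h]; exact fderiv_id
      have hT1 : dOne α (ρ (1:G) p) (fderiv ℝ (ρ (1:G)) p u) (fderiv ℝ (ρ (1:G)) p v)
          * dOne α p u v = dOne α p u v * dOne α p u v := by
        rw [hid, hρ1 p]; rfl
      have h1 := Finset.single_le_sum (f := fun g : G =>
          dOne α (ρ g p) (fderiv ℝ (ρ g) p u) (fderiv ℝ (ρ g) p v) * dOne α p u v)
        (fun g _ => hor g p u v) (Finset.mem_univ (1:G))
      rw [hT1] at h1
      have h2 : ((Fintype.card G : ℝ)⁻¹ * ∑ g : G,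
            dOne α (ρ g p) (fderiv ℝ (ρ g) p u) (fderiv ℝ (ρ g) p v)) * dOne α p u v
          = (Fintype.card G : ℝ)⁻¹ * ∑ g : G,
            dOne α (ρ g p) (fderiv ℝ (ρ g) p u) (fderiv ℝ (ρ g) p v) * dOne α p u v := by
        rw [mul_assoc, Finset.sum_mul]
      rw [h2]
      refine mul_le_mul_of_nonneg_left ?_ (le_of_lt hcinv)
      calc dOne α p u v ^ 2 = dOne α p u v * dOne α p u v := sq (dOne α p u v) ▸ by ring
        _ ≤ _ := h1
    have hXdec : X p = (X p).1 • e1 + (X p).2.1 • e2 + (X p).2.2 • e3 := by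
      simp [e1, e2, e3, Prod.ext_iff]
    -- the six linear equations coming from ι_X dα = 0 and ι_X dᾱ = 0
    have EW : ∀ w, (X p).1 * dOne (avgForm G ρ α) p e1 w
        + (X p).2.1 * dOne (avgForm G ρ α) p e2 w
        + (X p).2.2 * dOne (avgForm G ρ α) p e3 w = 0 := by
      intro w
      have h := hiXavg p w
      rw [hXdec, dOne_fst_expand _ havgsm] at h
      exact h
    have ES : ∀ w, (X p).1 * dOne α p e1 w + (X p).2.1 * dOne α p e2 w
        + (X p).2.2 * dOne α p e3 w = 0 := by
      intro w
      have h := hiXα p w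
      rw [hXdec, dOne_fst_expand _ hαsm] at h
      exact h
    have hSp := hcontact p
    simp only [wedge12] at hSp ⊢
    have hexp : avgForm G ρ α p (X p) = avgForm G ρ α p e1 * (X p).1
        + avgForm G ρ α p e2 * (X p).2.1 + avgForm G ρ α p e3 * (X p).2.2 := by
      rw [hXdec]; simp only [map_add, _root_.map_smul, smul_eq_mul]
      simp [e1, e2, e3]
      ring
    have ha : 0 < avgForm G ρ α p e1 * (X p).1 + avgForm G ρ α p e2 * (X p).2.1
        + avgForm G ρ α p e3 * (X p).2.2 := hexp ▸ haX p
    have hx : ¬((X p).1 = 0 ∧ (X p).2.1 = 0 ∧ (X p).2.2 = 0) := by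
      rintro ⟨h1, h2, h3⟩
      exact hX p (by rw [hXdec, h1, h2, h3]; simp)
    refine key_alg ((Fintype.card G : ℝ)⁻¹) (X p).1 (X p).2.1 (X p).2.2
      (dOne (avgForm G ρ α) p e1 e2) (dOne (avgForm G ρ α) p e1 e3)
      (dOne (avgForm G ρ α) p e2 e3)
      (dOne α p e1 e2) (dOne α p e1 e3) (dOne α p e2 e3)
      (avgForm G ρ α p e1) (avgForm G ρ α p e2) (avgForm G ρ α p e3)
      (α p e1) (α p e2) (α p e3) hcinv ?_ ?_ ?_ ?_ ?_ ?_
      (hsgn e1 e2) (hsgn e1 e3) (hsgn e2 e3) hSp ha hx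
    · have h := EW e1
      rw [show dOne (avgForm G ρ α) p e1 e1 = 0 from sub_self _,
        dOne_antisymm (avgForm G ρ α) p e2 e1, dOne_antisymm (avgForm G ρ α) p e3 e1] at h
      linarith
    · have h := EW e2
      rw [show dOne (avgForm G ρ α) p e2 e2 = 0 from sub_self _,
        dOne_antisymm (avgForm G ρ α) p e3 e2] at h
      linarith
    · have h := EW e3
      rw [show dOne (avgForm G ρ α) p e3 e3 = 0 from sub_self _] at h
      linarith
    · have h := ES e1
      rw [show dOne α p e1 e1 = 0 from sub_self _,
        dOne_antisymm α p e2 e1, dOne_antisymm α p e3 e1] at h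
      linarith
    · have h := ES e2
      rw [show dOne α p e2 e2 = 0 from sub_self _, dOne_antisymm α p e3 e2] at h
      linarith
    · have h := ES e3
      rw [show dOne α p e3 e3 = 0 from sub_self _] at h
      linarith
  · refine ⟨fun p => (avgForm G ρ α p (X p))⁻¹,
      fun p => inv_pos.mpr (haX p), fun p => ?_, fun p v => ?_⟩
    · rw [_root_.map_smul, smul_eq_mul]
      exact inv_mul_cancel₀ (ne_of_gt (haX p))
    · rw [dOne_smul_fst _ havgsm, hiXavg p v, mul_zero]
end
end
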